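/- arXiv:0906.5389 — 5 statements merged into one kernel-verified Lean document; each statement's English description precedes it below -/
import Mathlib

section
/- If there exists a nontrivial strongly regular graph with parameters (n, k, λ, μ), then the two real numbers (1/2)·(n − 1 − ((n−1)(λ−μ) + 2k)/√((λ−μ)² + 4(k−μ))) and (1/2)·(n − 1 + ((n−1)(λ−μ) + 2k)/√((λ−μ)² + 4(k−μ))) are both nonnegative integers. -/
/-!
Let `A` be the adjacency matrix, `J` the all-ones matrix and `C = I - J/n` the centering matrix.
Since `AJ = JA = kJ` and `JC = 0`, multiplying `A² = (λ-μ)A + (k-μ)I + μJ` by `C` shows that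
`X = AC` satisfies `X² = (r+s)X - rsC`, where `r, s` are the roots of `t² - (λ-μ)t - (k-μ)`;
they are distinct because an edge gives `λ < k` and a non-edge gives `μ ≤ k`.
As `C` is idempotent and commutes with `X`, the elements `(X - sC)/(r - s)` and `(X - rC)/(s - r)`
are idempotent, so their traces are ranks; `tr X = -k` and `tr C = n - 1` turn these traces
into the two displayed numbers.
-/

open Matrix

theorem Matrix.trace_eq_rank_of_isIdempotentElem {K V : Type*} [Field K] [Fintype V]
    [DecidableEq V] {M : Matrix V V K} (h : IsIdempotentElem M) : M.trace = M.rank := by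
  have hM : IsIdempotentElem (toLin' M) := h.map toLinAlgEquiv'
  rw [Matrix.rank, ← Matrix.toLin'_apply',
    ← (LinearMap.IsIdempotentElem.isProj_range _ hM).trace,
    LinearMap.trace_eq_matrix_trace K (Pi.basisFun K V), LinearMap.toMatrix_eq_toMatrix',
    LinearMap.toMatrix'_toLin']

theorem isIdempotentElem_inv_sub_smul_sub_smul {K R : Type*} [Field K] [Ring R] [Algebra K R]
    {X F : R} {r s : K} (hF : IsIdempotentElem F) (hXF : X * F = X) (hFX : F * X = X)
    (hX : X * X = (r + s) • X - (r * s) • F) (hrs : r ≠ s) :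
    IsIdempotentElem ((r - s)⁻¹ • (X - s • F)) := by
  have hsq : (X - s • F) * (X - s • F) = (r - s) • (X - s • F) := by
    simp only [sub_mul, mul_sub, smul_mul_assoc, mul_smul_comm, hXF, hFX, hF.eq, hX]
    module
  rw [IsIdempotentElem, smul_mul_smul_comm, hsq, smul_smul, mul_assoc,
    inv_mul_cancel₀ (sub_ne_zero.mpr hrs), mul_one]

section
variable {V K : Type*} [Fintype V] [Field K]

theorem Matrix.of_one_mul_of_one :
    (of 1 : Matrix V V K) * of 1 = (Fintype.card V : K) • of 1 := by
  ext; simp [mul_apply]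

theorem Matrix.trace_of_one : (of 1 : Matrix V V K).trace = Fintype.card V := by
  simp [trace]

namespace SimpleGraph
variable {G : SimpleGraph V} [DecidableRel G.Adj] {n k ℓ μ : ℕ}

theorem IsRegularOfDegree.adjMatrix_mul_of_one (h : G.IsRegularOfDegree k) :
    G.adjMatrix K * of 1 = (k : K) • of 1 := by
  ext i j; simp [adjMatrix_mul_apply, h i]

theorem IsRegularOfDegree.of_one_mul_adjMatrix (h : G.IsRegularOfDegree k) :
    of 1 * G.adjMatrix K = (k : K) • of 1 := by
  ext i j; simp [mul_adjMatrix_apply, h j]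

theorem IsSRGWith.lt_of_degree_pos [Nonempty V] (h : G.IsSRGWith n k ℓ μ) (hk : 0 < k) :
    ℓ < k := by
  obtain ⟨v⟩ := ‹Nonempty V›
  obtain ⟨w, hvw⟩ := (G.degree_pos_iff_exists_adj v).mp (by rw [h.regular v]; exact hk)
  simpa only [h.of_adj v w hvw, h.regular v] using hvw.card_commonNeighbors_lt_degree

end SimpleGraph

variable [DecidableEq V]

variable (V K) in
noncomputable def centeringMatrix : Matrix V V K := 1 - (Fintype.card V : K)⁻¹ • of 1

theorem isIdempotentElem_centeringMatrix : IsIdempotentElem (centeringMatrix V K) := by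
  have hn : ((Fintype.card V : K)⁻¹ * (Fintype.card V : K)⁻¹) * Fintype.card V
      = (Fintype.card V : K)⁻¹ := by
    simpa only [inv_inv] using mul_self_mul_inv (Fintype.card V : K)⁻¹
  rw [IsIdempotentElem, centeringMatrix]
  simp only [sub_mul, mul_sub, one_mul, mul_one, smul_mul_smul_comm, of_one_mul_of_one,
    smul_smul, hn]
  abel

theorem of_one_mul_centeringMatrix [CharZero K] :
    (of 1 : Matrix V V K) * centeringMatrix V K = 0 := by
  cases isEmpty_or_nonempty V
  · exact Subsingleton.elim _ _
  rw [centeringMatrix, mul_sub, mul_one, mul_smul_comm, of_one_mul_of_one, smul_smul,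
    inv_mul_cancel₀ (Nat.cast_ne_zero.mpr Fintype.card_ne_zero), one_smul, sub_self]

theorem trace_centeringMatrix [Nonempty V] [CharZero K] :
    (centeringMatrix V K).trace = Fintype.card V - 1 := by
  rw [centeringMatrix, trace_sub, trace_one, trace_smul, trace_of_one, smul_eq_mul,
    inv_mul_cancel₀ (Nat.cast_ne_zero.mpr Fintype.card_ne_zero)]

namespace SimpleGraph
variable {G : SimpleGraph V} [DecidableRel G.Adj] {n k ℓ μ : ℕ}

theorem IsRegularOfDegree.commute_adjMatrix_centeringMatrix (h : G.IsRegularOfDegree k) :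
    Commute (G.adjMatrix K) (centeringMatrix V K) := by
  simp only [Commute, SemiconjBy, centeringMatrix, mul_sub, sub_mul, mul_one, one_mul,
    mul_smul_comm, smul_mul_assoc, h.adjMatrix_mul_of_one, h.of_one_mul_adjMatrix]

theorem IsRegularOfDegree.trace_adjMatrix_mul_centeringMatrix [CharZero K] [Nonempty V]
    (h : G.IsRegularOfDegree k) : (G.adjMatrix K * centeringMatrix V K).trace = -k := by
  rw [centeringMatrix, mul_sub, mul_one, mul_smul_comm, h.adjMatrix_mul_of_one, trace_sub,
    trace_adjMatrix, trace_smul, trace_smul, trace_of_one, smul_eq_mul, smul_eq_mul,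
    mul_left_comm, inv_mul_cancel₀ (Nat.cast_ne_zero.mpr Fintype.card_ne_zero), mul_one, zero_sub]

theorem IsSRGWith.adjMatrix_sq_mul_centeringMatrix [CharZero K] (h : G.IsSRGWith n k ℓ μ) :
    G.adjMatrix K ^ 2 * centeringMatrix V K =
      ((ℓ : K) - μ) • (G.adjMatrix K * centeringMatrix V K) +
        ((k : K) - μ) • centeringMatrix V K := by
  classical
  have hcompl : Gᶜ.adjMatrix K = of 1 - 1 - G.adjMatrix K := by
    rw [← G.compl_adjMatrix_eq_adjMatrix_compl K,
      ← G.one_add_adjMatrix_add_compl_adjMatrix_eq_of_one K]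
    abel
  rw [h.matrix_eq, hcompl]
  simp only [add_mul, sub_mul, smul_mul_assoc, one_mul, of_one_mul_centeringMatrix,
    ← Nat.cast_smul_eq_nsmul K]
  module

theorem IsSRGWith.exists_natCast_eq_multiplicity [CharZero K] [Nonempty V]
    (h : G.IsSRGWith n k ℓ μ) {r s : K} (hrs : r ≠ s) (hsum : r + s = ℓ - μ)
    (hprod : r * s = μ - k) : ∃ m : ℕ, (m : K) = (-(k : K) - s * ((n : K) - 1)) / (r - s) := by
  set A := G.adjMatrix K
  set C := centeringMatrix V K
  have hC : IsIdempotentElem C := isIdempotentElem_centeringMatrix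
  have hAC : A * C = C * A := h.regular.commute_adjMatrix_centeringMatrix.eq
  have hX : A * C * (A * C) = (r + s) • (A * C) - (r * s) • C := by
    rw [mul_assoc, ← mul_assoc C, ← hAC, mul_assoc, hC.eq, ← mul_assoc, ← sq,
      h.adjMatrix_sq_mul_centeringMatrix, hsum, hprod]
    module
  have hP := isIdempotentElem_inv_sub_smul_sub_smul hC (by rw [mul_assoc, hC.eq])
    (by rw [← mul_assoc, ← hAC, mul_assoc, hC.eq]) hX hrs
  refine ⟨_, (trace_eq_rank_of_isIdempotentElem hP).symm.trans ?_⟩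
  rw [trace_smul, trace_sub, trace_smul, h.regular.trace_adjMatrix_mul_centeringMatrix,
    trace_centeringMatrix, h.card, smul_eq_mul, smul_eq_mul, div_eq_inv_mul]

theorem IsSRGWith.le_of_lt_card (h : G.IsSRGWith n k ℓ μ) (hkn : k + 1 < n) : μ ≤ k := by
  obtain ⟨v⟩ : Nonempty V := by rw [← Fintype.card_pos_iff, h.card]; omega
  obtain ⟨w, hvw, hnadj⟩ :=
    (Gᶜ.degree_pos_iff_exists_adj v).mp (by rw [h.compl_is_regular v]; omega)
  simpa only [h.of_not_adj hvw hnadj, h.regular v] using G.card_commonNeighbors_le_degree_left v w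

theorem IsSRGWith.discriminant_pos {K : Type*} [Field K] [LinearOrder K] [IsStrictOrderedRing K]
    (h : G.IsSRGWith n k ℓ μ) (hk : 0 < k) (hkn : k + 1 < n) :
    (0 : K) < ((ℓ : K) - μ) ^ 2 + 4 * ((k : K) - μ) := by
  have : Nonempty V := by rw [← Fintype.card_pos_iff, h.card]; omega
  have hℓ : (ℓ : K) < k := by exact_mod_cast h.lt_of_degree_pos hk
  have hμ : (μ : K) ≤ k := by exact_mod_cast h.le_of_lt_card hkn
  rcases hμ.lt_or_eq with hμ | hμ
  · nlinarith [sq_nonneg ((ℓ : K) - μ)]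
  · rw [hμ]; nlinarith

end SimpleGraph
end

/-- If there exists a nontrivial strongly regular graph with parameters `(n, k, l, μ)`,
then the two real numbers
`(1/2)·(n − 1 ∓ ((n−1)(l−μ) + 2k)/√((l−μ)² + 4(k−μ)))` are nonnegative integers. -/
theorem srg_eigenvalue_multiplicities (n k l μ : ℕ)
    (h : ∃ (V : Type) (_ : Fintype V) (G : SimpleGraph V) (_ : DecidableRel G.Adj),
      G.IsSRGWith n k l μ)
    (hk : 0 < k) (hkn : k < n - 1) :
    (∃ m : ℕ, (m : ℝ) =
      (1 / 2) * ((n : ℝ) - 1 -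
        (((n : ℝ) - 1) * ((l : ℝ) - (μ : ℝ)) + 2 * (k : ℝ)) /
          Real.sqrt (((l : ℝ) - (μ : ℝ)) ^ 2 + 4 * ((k : ℝ) - (μ : ℝ))))) ∧
    (∃ m : ℕ, (m : ℝ) =
      (1 / 2) * ((n : ℝ) - 1 +
        (((n : ℝ) - 1) * ((l : ℝ) - (μ : ℝ)) + 2 * (k : ℝ)) /
          Real.sqrt (((l : ℝ) - (μ : ℝ)) ^ 2 + 4 * ((k : ℝ) - (μ : ℝ))))) := by
  classical
  obtain ⟨V, _, G, _, hG⟩ := h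
  have hkn' : k + 1 < n := by omega
  have : Nonempty V := by rw [← Fintype.card_pos_iff, hG.card]; omega
  set D : ℝ := ((l : ℝ) - μ) ^ 2 + 4 * ((k : ℝ) - μ)
  have hD : 0 < D := hG.discriminant_pos hk hkn'
  set r := ((l : ℝ) - μ + √D) / 2
  set s := ((l : ℝ) - μ - √D) / 2
  have hsqrt : 0 < √D := Real.sqrt_pos.mpr hD
  have hdiff : r - s = √D := by ring
  have hsum : r + s = l - μ := by ring
  have hprod : r * s = μ - k := by
    linear_combination (-1 / 4 : ℝ) * Real.sq_sqrt hD.le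
  obtain ⟨m₁, hm₁⟩ := hG.exists_natCast_eq_multiplicity (by linarith) hsum hprod
  obtain ⟨m₂, hm₂⟩ := hG.exists_natCast_eq_multiplicity (r := s) (s := r)
    (by linarith) ((add_comm s r).trans hsum) ((mul_comm s r).trans hprod)
  refine ⟨⟨m₁, hm₁.trans ?_⟩, ⟨m₂, hm₂.trans ?_⟩⟩
  · rw [hdiff]
    field_simp
    ring
  · rw [← neg_sub r s, hdiff]
    field_simp
    ring
end

section
/- If there exists a strongly regular graph with parameters (n, k, λ, μ), then for every prime p, p divides the integer c_p, where the integer sequence (c_ℓ) is defined by c₀ = n, c₁ = 0, and c_ℓ = μ·n·k^{ℓ−2} + (λ−μ)·c_{ℓ−1} + (k−μ)·c_{ℓ−2} for ℓ ≥ 2. -/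
open Matrix Finset

section helpers
variable {V : Type} [Fintype V] [DecidableEq V] {G : SimpleGraph V} [DecidableRel G.Adj]
variable {α : Type} [CommRing α]

lemma my_rowsum (i : V) : ∑ j, G.adjMatrix α i j = (G.degree i : α) := by
  simp [SimpleGraph.adjMatrix, SimpleGraph.degree, SimpleGraph.neighborFinset_eq_filter,
    Finset.sum_boole]

lemma my_colsum (j : V) : ∑ i, G.adjMatrix α i j = (G.degree j : α) := by
  rw [← my_rowsum j]
  exact Finset.sum_congr rfl fun i _ => by simp [SimpleGraph.adjMatrix, SimpleGraph.adj_comm]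

lemma my_compl_adjMatrix_eq :
    Gᶜ.adjMatrix α = (Matrix.of fun _ _ => (1:α)) - 1 - G.adjMatrix α := by
  ext i j
  by_cases h : i = j <;> by_cases h2 : G.Adj i j <;>
    simp_all [Matrix.one_apply, SimpleGraph.compl_adj]

lemma my_sum_entries_pow {n k l μ : ℕ} (h : G.IsSRGWith n k l μ) (ℓ : ℕ) :
    ∑ i, ∑ j, (G.adjMatrix α ^ ℓ) i j = (n : α) * (k : α) ^ ℓ := by
  induction ℓ with
  | zero => simp [Matrix.one_apply, ← h.card, Finset.card_univ]
  | succ ℓ ih =>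
      have key : ∑ i, ∑ j, (G.adjMatrix α ^ (ℓ+1)) i j
          = ∑ m, (∑ i, G.adjMatrix α i m) * (∑ j, (G.adjMatrix α ^ ℓ) m j) := by
        simp only [pow_succ', Matrix.mul_apply]
        calc ∑ i, ∑ j, ∑ m, G.adjMatrix α i m * (G.adjMatrix α ^ ℓ) m j
            = ∑ i, ∑ m, ∑ j, G.adjMatrix α i m * (G.adjMatrix α ^ ℓ) m j :=
              Finset.sum_congr rfl fun i _ => Finset.sum_comm
          _ = ∑ m, ∑ i, ∑ j, G.adjMatrix α i m * (G.adjMatrix α ^ ℓ) m j :=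
              Finset.sum_comm
          _ = ∑ m, (∑ i, G.adjMatrix α i m) * (∑ j, (G.adjMatrix α ^ ℓ) m j) :=
              Finset.sum_congr rfl fun m _ => by
                rw [Finset.sum_mul]
                exact Finset.sum_congr rfl fun i _ => (Finset.mul_sum _ _ _).symm
      rw [key]
      have : ∀ m : V, (∑ i, G.adjMatrix α i m) = (k : α) := fun m => by
        rw [my_colsum, h.regular m]
      simp only [this, ← Finset.mul_sum, ih]
      ring

lemma my_trace_eq {n k l μ : ℕ} (h : G.IsSRGWith n k l μ) (ℓ : ℕ) :
    Matrix.trace (G.adjMatrix α ^ (ℓ + 2))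
      = (μ : α) * n * (k : α) ^ ℓ + ((l : α) - μ) * Matrix.trace (G.adjMatrix α ^ (ℓ+1))
        + ((k : α) - μ) * Matrix.trace (G.adjMatrix α ^ ℓ) := by
  have hsq := h.matrix_eq (α := α)
  have hJ : Matrix.trace ((Matrix.of fun _ _ => (1:α)) * (G.adjMatrix α ^ ℓ))
      = (n : α) * (k : α) ^ ℓ := by
    rw [← my_sum_entries_pow (α := α) h ℓ]
    simp only [Matrix.trace, Matrix.diag, Matrix.mul_apply, Matrix.of_apply, one_mul]
    exact Finset.sum_comm
  have hA : G.adjMatrix α ^ (ℓ + 2) = G.adjMatrix α ^ 2 * G.adjMatrix α ^ ℓ := by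
    rw [← pow_add]; ring_nf
  rw [hA, hsq, my_compl_adjMatrix_eq]
  simp only [Matrix.add_mul, Matrix.sub_mul, Matrix.smul_mul, Matrix.trace_add,
    Matrix.trace_sub, Matrix.trace_smul, Matrix.one_mul]
  rw [hJ]
  have h1 : G.adjMatrix α * G.adjMatrix α ^ ℓ = G.adjMatrix α ^ (ℓ+1) := by
    rw [pow_succ']
  rw [h1]
  simp only [nsmul_eq_mul]
  push_cast
  ring

end helpers

/-- If there exists a strongly regular graph with parameters `(n, k, l, μ)`, then
every prime `p` divides `c p`, where `c 0 = n`, `c 1 = 0`, and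
`c ℓ = μ·n·k^(ℓ−2) + (l−μ)·c (ℓ−1) + (k−μ)·c (ℓ−2)` for `ℓ ≥ 2`. -/
theorem srg_prime_dvd_closed_walk_count (n k l μ : ℕ)
    (h : ∃ (V : Type) (_ : Fintype V) (G : SimpleGraph V) (_ : DecidableRel G.Adj),
      G.IsSRGWith n k l μ)
    (c : ℕ → ℤ) (hc0 : c 0 = n) (hc1 : c 1 = 0)
    (hrec : ∀ ℓ : ℕ, c (ℓ + 2) =
      (μ : ℤ) * n * (k : ℤ) ^ ℓ + ((l : ℤ) - μ) * c (ℓ + 1) + ((k : ℤ) - μ) * c ℓ)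
    (p : ℕ) (hp : p.Prime) :
    (p : ℤ) ∣ c p := by
  obtain ⟨V, _, G, _, hsrg⟩ := h
  classical
  haveI : Fact p.Prime := ⟨hp⟩
  set A := G.adjMatrix (ZMod p) with hA
  have key : ∀ ℓ : ℕ, ((c ℓ : ZMod p)) = Matrix.trace (A ^ ℓ) := by
    have H : ∀ ℓ : ℕ, ((c ℓ : ZMod p)) = Matrix.trace (A ^ ℓ) ∧
        ((c (ℓ+1) : ZMod p)) = Matrix.trace (A ^ (ℓ+1)) := by
      intro ℓ
      induction ℓ with
      | zero =>
          constructor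
          · rw [hc0, pow_zero, Matrix.trace_one]
            push_cast [← hsrg.card, Finset.card_univ]
            rfl
          · rw [hc1, pow_one, hA, SimpleGraph.trace_adjMatrix]
            simp
      | succ ℓ ih =>
          refine ⟨ih.2, ?_⟩
          rw [hrec ℓ, my_trace_eq hsrg ℓ]
          push_cast
          rw [ih.1, ih.2]
    exact fun ℓ => (H ℓ).1
  have := key p
  rw [ZMod.trace_pow_card, hA, SimpleGraph.trace_adjMatrix, zero_pow hp.ne_zero] at this
  exact (ZMod.intCast_zmod_eq_zero_iff_dvd _ _).mp this
end

section
/- Let n, k, λ, μ be nonnegative integers such that 0 < k < n − 1, such that (n − 1 − k)·μ = k·(k − 1 − λ), and such that the two real numbers (1/2)·(n − 1 ± ((n−1)(λ−μ) + 2k)/√((λ−μ)² + 4(k−μ))) are nonnegative integers (in particular (λ−μ)² + 4(k−μ) > 0). Then every prime p divides the integer c_p, where the integer sequence (c_ℓ) is defined by c₀ = n, c₁ = 0, and c_ℓ = μ·n·k^{ℓ−2} + (λ−μ)·c_{ℓ−1} + (k−μ)·c_{ℓ−2} for ℓ ≥ 2. -/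
/-!
Subtracting `k ^ ℓ` from `c ℓ` leaves a solution `d` of `d (ℓ + 2) = A d (ℓ + 1) + B d ℓ` with
`A = l - μ`, `B = k - μ`, whose Binet form is `d ℓ = m₁ r ^ ℓ + m₂ s ^ ℓ` with `r, s = (A ± √D) / 2`,
`D = A ^ 2 + 4 B`; the hypotheses say that these weights (the eigenvalue multiplicities of a strongly
regular graph) are the natural numbers `m₁, m₂`. If `r` and `s` live in a ring of characteristic `p`,
the Frobenius gives `c p ≡ k ^ p + m₁ r ^ p + m₂ s ^ p = (k + m₁ r + m₂ s) ^ p = (c 1) ^ p = 0`.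
Such a ring exists: for `m₁ ≠ m₂` the identity `(m₂ - m₁) √D = (n - 1) A + 2 k` makes `√D` an
integer, so `ZMod p` will do, and for `m₁ = m₂` one adjoins a root of `X ^ 2 - A X - B` to `ZMod p`.
-/

open QuadraticAlgebra

theorem eq_mul_pow_add_mul_pow_of_recurrence {R : Type*} [CommRing R] {A B r s a b : R}
    (hr : r ^ 2 = A * r + B) (hs : s ^ 2 = A * s + B) {u : ℕ → R}
    (hu : ∀ ℓ, u (ℓ + 2) = A * u (ℓ + 1) + B * u ℓ) (h0 : u 0 = a + b)
    (h1 : u 1 = a * r + b * s) (ℓ : ℕ) : u ℓ = a * r ^ ℓ + b * s ^ ℓ := by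
  induction ℓ using Nat.twoStepInduction with
  | zero => simpa using h0
  | one => simpa using h1
  | more ℓ ih₀ ih₁ =>
    rw [hu, ih₀, ih₁]
    linear_combination -(a * r ^ ℓ) * hr - (b * s ^ ℓ) * hs

theorem modEq_of_eq_mul_pow_add_mul_pow {R : Type*} [CommRing R] (p : ℕ) [Fact p.Prime]
    [CharP R p] {A B : ℤ} {d : ℕ → ℤ} (hd : ∀ ℓ, d (ℓ + 2) = A * d (ℓ + 1) + B * d ℓ)
    {r s : R} (hr : r ^ 2 = A * r + B) (hs : s ^ 2 = A * s + B) {a b : ℤ}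
    (h0 : d 0 = a + b) (h1 : (d 1 : R) = a * r + b * s) : d p ≡ d 1 [ZMOD p] := by
  have binet := eq_mul_pow_add_mul_pow_of_recurrence (u := fun ℓ ↦ (d ℓ : R)) hr hs
    (fun ℓ ↦ by push_cast [hd]; rfl) (by push_cast [h0]; rfl) h1
  rw [← CharP.intCast_eq_intCast R p]
  calc (d p : R) = a * r ^ p + b * s ^ p := binet p
    _ = frobenius R p (a * r + b * s) := by
      rw [map_add, map_mul, map_mul, map_intCast, map_intCast, frobenius_def, frobenius_def]
    _ = d 1 := by rw [← h1, map_intCast]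

theorem exists_sq_eq_and_mul_eq_of_mul_sqrt_eq {D M q : ℤ} (hD : 0 ≤ D) (hq : q ≠ 0)
    (h : (q : ℝ) * √(D : ℝ) = M) : ∃ t : ℤ, t ^ 2 = D ∧ q * t = M := by
  have hsq : M ^ 2 = q ^ 2 * D := by
    have : (M : ℝ) ^ 2 = q ^ 2 * D := by
      rw [← h, mul_pow, Real.sq_sqrt (by exact_mod_cast hD)]
    exact_mod_cast this
  obtain ⟨t, rfl⟩ : q ∣ M := (Int.pow_dvd_pow_iff two_ne_zero).mp ⟨D, hsq⟩
  have ht : (t : ℝ) = √(D : ℝ) :=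
    mul_left_cancel₀ (Int.cast_ne_zero.mpr hq) (by push_cast at h; rw [h])
  refine ⟨t, ?_, rfl⟩
  have : (t : ℝ) ^ 2 = D := by rw [ht, Real.sq_sqrt (by exact_mod_cast hD)]
  exact_mod_cast this

theorem even_add_of_sq_eq_sq_add_four_mul {A B t : ℤ} (h : t ^ 2 = A ^ 2 + 4 * B) :
    Even (A + t) := by
  have h4 : Even (4 : ℤ) := ⟨2, rfl⟩
  simpa [Int.even_add, parity_simps, h4] using (congrArg Even h).symm

theorem modEq_of_recurrence_of_int_binet_coeffs {A B : ℤ} {d : ℕ → ℤ}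
    (hd : ∀ ℓ, d (ℓ + 2) = A * d (ℓ + 1) + B * d ℓ) (hD : 0 ≤ A ^ 2 + 4 * B) {a b : ℤ}
    (h0 : d 0 = a + b) (h1 : 2 * (d 1 : ℝ) = (a + b) * A + (a - b) * √((A : ℝ) ^ 2 + 4 * B))
    (p : ℕ) [Fact p.Prime] : d p ≡ d 1 [ZMOD p] := by
  rcases eq_or_ne a b with rfl | hab
  · have hd1 : d 1 = a * A := by
      have : (d 1 : ℝ) = a * A := by linarith
      exact_mod_cast this
    let Q := QuadraticAlgebra (ZMod p) (B : ZMod p) (A : ZMod p)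
    have : CharP Q p := charP_of_injective_algebraMap algebraMap_injective p
    have hω : (ω : Q) ^ 2 = (A : Q) * ω + (B : Q) := by
      rw [sq, omega_mul_omega_eq_algebraMap, map_intCast, map_intCast]; ring
    refine modEq_of_eq_mul_pow_add_mul_pow p hd hω (s := (A : Q) - ω)
      (by linear_combination hω) h0 ?_
    push_cast [hd1]; ring
  · obtain ⟨t, ht2, ht⟩ := exists_sq_eq_and_mul_eq_of_mul_sqrt_eq (M := 2 * d 1 - (a + b) * A)
      hD (sub_ne_zero.mpr hab) (by push_cast; linarith)
    obtain ⟨r, hr⟩ := even_add_of_sq_eq_sq_add_four_mul ht2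
    have hr2 : r ^ 2 = A * r + B := by
      have : 4 * (r ^ 2 - A * r - B) = 0 := by linear_combination ht2 - (r + r - A + t) * hr
      linarith
    have hd1 : d 1 = a * r + b * (A - r) := by
      have : 2 * d 1 = 2 * (a * r + b * (A - r)) := by linear_combination (a - b) * hr - ht
      linarith
    have hr2' : (r : ZMod p) ^ 2 = A * r + B := by
      exact_mod_cast congrArg (Int.cast : ℤ → ZMod p) hr2
    refine modEq_of_eq_mul_pow_add_mul_pow p hd hr2' (s := (A : ZMod p) - r)
      (by linear_combination hr2') h0 (by push_cast [hd1]; ring)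

theorem walk_condition_subsumed_general (n k l μ : ℕ)
    (hparam : ((n : ℤ) - 1 - k) * μ = (k : ℤ) * ((k : ℤ) - 1 - l))
    (hdisc : 0 < ((l : ℝ) - μ) ^ 2 + 4 * ((k : ℝ) - μ))
    (hm1 : ∃ m : ℕ, (m : ℝ) =
      (1 / 2) * ((n : ℝ) - 1 -
        (((n : ℝ) - 1) * ((l : ℝ) - μ) + 2 * k) /
          Real.sqrt (((l : ℝ) - μ) ^ 2 + 4 * ((k : ℝ) - μ))))
    (hm2 : ∃ m : ℕ, (m : ℝ) =
      (1 / 2) * ((n : ℝ) - 1 +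
        (((n : ℝ) - 1) * ((l : ℝ) - μ) + 2 * k) /
          Real.sqrt (((l : ℝ) - μ) ^ 2 + 4 * ((k : ℝ) - μ))))
    (c : ℕ → ℤ) (hc0 : c 0 = n) (hc1 : c 1 = 0)
    (hrec : ∀ ℓ : ℕ, c (ℓ + 2) =
      (μ : ℤ) * n * (k : ℤ) ^ ℓ + ((l : ℤ) - μ) * c (ℓ + 1) + ((k : ℤ) - μ) * c ℓ)
    (p : ℕ) (hp : p.Prime) :
    (p : ℤ) ∣ c p := by
  have : Fact p.Prime := ⟨hp⟩
  obtain ⟨m₁, hm₁⟩ := hm1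
  obtain ⟨m₂, hm₂⟩ := hm2
  have hS : √(((l : ℝ) - μ) ^ 2 + 4 * ((k : ℝ) - μ)) ≠ 0 := (Real.sqrt_pos.mpr hdisc).ne'
  have hsum : (m₁ : ℝ) + m₂ = n - 1 := by rw [hm₁, hm₂]; ring
  have hdiff : ((m₁ : ℝ) - m₂) * √(((l : ℝ) - μ) ^ 2 + 4 * ((k : ℝ) - μ)) =
      -(((n : ℝ) - 1) * ((l : ℝ) - μ) + 2 * k) := by
    rw [hm₁, hm₂]; field_simp; ring
  have hk2 : (k : ℤ) ^ 2 = μ * n + (l - μ) * k + (k - μ) := by linear_combination -hparam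
  have key := modEq_of_recurrence_of_int_binet_coeffs (d := fun ℓ ↦ c ℓ - (k : ℤ) ^ ℓ)
    (A := (l : ℤ) - μ) (B := (k : ℤ) - μ) (a := m₁) (b := m₂)
    (fun ℓ ↦ by rw [hrec]; linear_combination -(k : ℤ) ^ ℓ * hk2)
    (by exact_mod_cast hdisc.le) (by rw [hc0, pow_zero]; exact_mod_cast hsum.symm)
    (by push_cast [hc1]; linear_combination -((l : ℝ) - μ) * hsum - hdiff) p
  rw [← ZMod.intCast_zmod_eq_zero_iff_dvd]
  have := (ZMod.intCast_eq_intCast_iff _ _ p).mpr key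
  push_cast [hc1, ZMod.pow_card] at this
  linear_combination this

/-- Let `n, k, l, μ` be nonnegative integers with `0 < k < n − 1`,
`(n − 1 − k)·μ = k·(k − 1 − l)`, and such that the two real numbers
`(1/2)·(n − 1 ∓ ((n−1)(l−μ) + 2k)/√((l−μ)² + 4(k−μ)))` are nonnegative integers
(in particular the discriminant is positive). Then every prime `p` divides `c p`,
where `c 0 = n`, `c 1 = 0`, and
`c ℓ = μ·n·k^(ℓ−2) + (l−μ)·c (ℓ−1) + (k−μ)·c (ℓ−2)` for `ℓ ≥ 2`. -/
theorem walk_condition_subsumed (n k l μ : ℕ)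
    (hk : 0 < k) (hkn : (k : ℤ) < (n : ℤ) - 1)
    (hparam : ((n : ℤ) - 1 - k) * μ = (k : ℤ) * ((k : ℤ) - 1 - l))
    (hdisc : 0 < ((l : ℝ) - μ) ^ 2 + 4 * ((k : ℝ) - μ))
    (hm1 : ∃ m : ℕ, (m : ℝ) =
      (1 / 2) * ((n : ℝ) - 1 -
        (((n : ℝ) - 1) * ((l : ℝ) - μ) + 2 * k) /
          Real.sqrt (((l : ℝ) - μ) ^ 2 + 4 * ((k : ℝ) - μ))))
    (hm2 : ∃ m : ℕ, (m : ℝ) =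
      (1 / 2) * ((n : ℝ) - 1 +
        (((n : ℝ) - 1) * ((l : ℝ) - μ) + 2 * k) /
          Real.sqrt (((l : ℝ) - μ) ^ 2 + 4 * ((k : ℝ) - μ))))
    (c : ℕ → ℤ) (hc0 : c 0 = n) (hc1 : c 1 = 0)
    (hrec : ∀ ℓ : ℕ, c (ℓ + 2) =
      (μ : ℤ) * n * (k : ℤ) ^ ℓ + ((l : ℤ) - μ) * c (ℓ + 1) + ((k : ℤ) - μ) * c ℓ)
    (p : ℕ) (hp : p.Prime) :
    (p : ℤ) ∣ c p :=
  walk_condition_subsumed_general n k l μ hparam hdisc hm1 hm2 c hc0 hc1 hrec p hp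
end

section
/- Let n, k, λ, μ be nonnegative integers with 0 < k < n − 1, with (n − 1 − k)·μ = k·(k − 1 − λ), and with (n − 1)·(λ − μ) + 2k = 0. Then μ = λ + 1, n = 2k + 1, and k = 2μ. -/
/-- If `0 < k < n − 1`, `(n − 1 − k)·μ = k·(k − 1 − l)`, and `(n−1)(l−μ) + 2k = 0`,
then `μ = l + 1`, `n = 2k + 1`, and `k = 2μ`. -/
theorem conference_graph_parameters (n k l μ : ℕ)
    (hk : 0 < k) (hkn : (k : ℤ) < (n : ℤ) - 1)
    (hparam : ((n : ℤ) - 1 - k) * μ = (k : ℤ) * ((k : ℤ) - 1 - l))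
    (hzero : ((n : ℤ) - 1) * ((l : ℤ) - μ) + 2 * k = 0) :
    μ = l + 1 ∧ n = 2 * k + 1 ∧ k = 2 * μ := by
  have hk' : (0 : ℤ) < k := by exact_mod_cast hk
  have hd : ((n : ℤ) - 1) * ((μ : ℤ) - l) = 2 * k := by linarith
  have hd1 : (μ : ℤ) - l = 1 := by
    rcases lt_trichotomy ((μ : ℤ) - l) 1 with h | h | h
    · exfalso
      have hle : (μ : ℤ) - l ≤ 0 := by omega
      nlinarith
    · exact h
    · exfalso
      have hge : (2 : ℤ) ≤ (μ : ℤ) - l := by omega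
      nlinarith
  have hn : (n : ℤ) - 1 = 2 * k := by
    have := hd; rw [hd1] at this; linarith
  have hμ : (μ : ℤ) = k - 1 - l := by
    have h2 : (k : ℤ) * μ = k * (k - 1 - l) := by
      have : ((n : ℤ) - 1 - k) = k := by linarith
      rw [this] at hparam; exact hparam
    have := mul_left_cancel₀ (ne_of_gt hk') h2
    linarith
  refine ⟨by omega, by omega, by omega⟩
end

section
/- Let p be an odd prime and μ a nonnegative integer, and define the rational number x_p = 2^{−p} · Σ_{i=0}^{(p−1)/2} C(p, 2i)·(4μ+1)^i. Then (2μ)^p − 4μ·x_p is an integer divisible by p. -/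
open Zsqrtd Finset

private def Lseq (μ : ℕ) : ℕ → ℤ
  | 0 => 2
  | 1 => 1
  | (n+2) => Lseq μ (n+1) + μ * Lseq μ n

private lemma sum_pair {M : Type*} [AddCommMonoid M] (f : ℕ → M) (n : ℕ) :
    ∑ k ∈ Finset.range (2*n), f k = ∑ i ∈ Finset.range n, (f (2*i) + f (2*i+1)) := by
  induction n with
  | zero => simp
  | succ k ih =>
      have h : 2 * (k+1) = (2*k) + 1 + 1 := by ring
      rw [h, Finset.sum_range_succ, Finset.sum_range_succ, ih, Finset.sum_range_succ,
        add_assoc]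

section
variable (μ : ℕ)

private lemma alpha_sq :
    (1 + sqrtd : ℤ√(4*μ+1))^2 = 2*(1+sqrtd) + ((4*μ : ℤ) : ℤ√(4*μ+1)) := by
  rw [Zsqrtd.ext_iff]
  constructor <;>
    simp [pow_two, Zsqrtd.re_mul, Zsqrtd.im_mul, Zsqrtd.re_add, Zsqrtd.im_add,
      Zsqrtd.re_intCast, Zsqrtd.im_intCast] <;> ring

private lemma beta_sq :
    (1 - sqrtd : ℤ√(4*μ+1))^2 = 2*(1-sqrtd) + ((4*μ : ℤ) : ℤ√(4*μ+1)) := by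
  rw [Zsqrtd.ext_iff]
  constructor <;>
    simp [pow_two, Zsqrtd.re_mul, Zsqrtd.im_mul, Zsqrtd.re_add, Zsqrtd.im_add,
      Zsqrtd.re_intCast, Zsqrtd.im_intCast] <;> ring

private lemma key (n : ℕ) :
    (1 + sqrtd : ℤ√(4*μ+1))^n + (1 - sqrtd)^n = ((2^n * Lseq μ n : ℤ) : ℤ√(4*μ+1)) := by
  set α : ℤ√(4*μ+1) := 1 + sqrtd with hα
  set β : ℤ√(4*μ+1) := 1 - sqrtd with hβ
  have H : ∀ n, (α^n + β^n = ((2^n * Lseq μ n : ℤ) : ℤ√(4*μ+1)) ∧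
      α^(n+1) + β^(n+1) = ((2^(n+1) * Lseq μ (n+1) : ℤ) : ℤ√(4*μ+1))) := by
    intro n
    induction n with
    | zero => constructor <;> · simp [Lseq, hα, hβ]; push_cast; ring
    | succ k ih =>
        refine ⟨ih.2, ?_⟩
        have h1 : α^(k+2) = 2*α^(k+1) + ((4*μ:ℤ) : ℤ√(4*μ+1))*α^k := by
          have h : α^(k+2) = α^k * α^2 := by ring
          rw [h, alpha_sq]; ring
        have h2 : β^(k+2) = 2*β^(k+1) + ((4*μ:ℤ) : ℤ√(4*μ+1))*β^k := by
          have h : β^(k+2) = β^k * β^2 := by ring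
          rw [h, beta_sq]; ring
        rw [h1, h2]
        have h3 : 2*α^(k+1) + ((4*μ:ℤ) : ℤ√(4*μ+1))*α^k + (2*β^(k+1) + ((4*μ:ℤ) : ℤ√(4*μ+1))*β^k)
            = 2*(α^(k+1)+β^(k+1)) + ((4*μ:ℤ) : ℤ√(4*μ+1))*(α^k+β^k) := by ring
        rw [h3, ih.1, ih.2]
        show _ = ((2^(k+2) * Lseq μ (k+2) : ℤ) : ℤ√(4*μ+1))
        rw [Lseq]
        push_cast
        ring
  exact (H n).1
end

private lemma binom_sum (μ m : ℕ) :
    (1 + sqrtd : ℤ√(4*μ+1))^(2*m+1) + (1 - sqrtd)^(2*m+1) =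
      ((2 * ∑ i ∈ Finset.range (m+1), ((2*m+1).choose (2*i) : ℤ) * (4*μ+1)^i : ℤ)
        : ℤ√(4*μ+1)) := by
  set p := 2*m+1 with hpdef
  have hω : (sqrtd : ℤ√(4*μ+1))^2 = ((4*μ+1 : ℤ) : ℤ√(4*μ+1)) := by
    rw [pow_two, Zsqrtd.dmuld]
  have e1 : (1 + sqrtd : ℤ√(4*μ+1))^p
      = ∑ k ∈ Finset.range (p+1), sqrtd^k * ((p.choose k : ℤ) : ℤ√(4*μ+1)) := by
    rw [show (1 + sqrtd : ℤ√(4*μ+1)) = sqrtd + 1 from add_comm _ _, add_pow]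
    refine Finset.sum_congr rfl fun k _ => ?_
    push_cast; ring
  have e2 : (1 - sqrtd : ℤ√(4*μ+1))^p
      = ∑ k ∈ Finset.range (p+1), (-sqrtd)^k * ((p.choose k : ℤ) : ℤ√(4*μ+1)) := by
    rw [show (1 - sqrtd : ℤ√(4*μ+1)) = -sqrtd + 1 by ring, add_pow]
    refine Finset.sum_congr rfl fun k _ => ?_
    push_cast; ring
  rw [e1, e2, ← Finset.sum_add_distrib]
  have hp1 : p + 1 = 2*(m+1) := by omega
  rw [hp1, sum_pair (fun k => sqrtd^k * ((p.choose k : ℤ) : ℤ√(4*μ+1))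
      + (-sqrtd)^k * ((p.choose k : ℤ) : ℤ√(4*μ+1)))]
  push_cast [Finset.mul_sum]
  refine Finset.sum_congr rfl fun i _ => ?_
  have h2i : sqrtd^(2*i) = ((4*μ+1 : ℤ) : ℤ√(4*μ+1))^i := by
    rw [pow_mul, hω]
  have hne : (-sqrtd : ℤ√(4*μ+1))^(2*i) = sqrtd^(2*i) := by
    rw [neg_pow, Even.neg_one_pow ⟨i, by ring⟩, one_mul]
  have hno : (-sqrtd : ℤ√(4*μ+1))^(2*i+1) = -(sqrtd^(2*i+1)) := by
    rw [neg_pow, Odd.neg_one_pow ⟨i, by ring⟩]; ring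
  rw [hne, hno, h2i]
  push_cast
  ring

/-- For an odd prime `p` and a nonnegative integer `μ`, with the rational number
`x_p = 2^{−p}·Σ_{i=0}^{(p−1)/2} C(p, 2i)·(4μ+1)^i`, the rational number
`(2μ)^p − 4μ·x_p` is an integer divisible by `p`. -/
theorem prime_dvd_case_two (p : ℕ) (hp : p.Prime) (hodd : Odd p) (μ : ℕ)
    (x : ℚ)
    (hx : x = (2 : ℚ) ^ (-(p : ℤ)) *
      ∑ i ∈ Finset.range ((p - 1) / 2 + 1), (p.choose (2 * i) : ℚ) * (4 * μ + 1) ^ i) :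
    ∃ z : ℤ, (z : ℚ) = (2 * (μ : ℚ)) ^ p - 4 * μ * x ∧ (p : ℤ) ∣ z := by
  obtain ⟨m, hm⟩ := hodd
  have hpm : p = 2*m+1 := by omega
  subst hpm
  have hm2 : (2*m+1-1)/2 = m := by omega
  set S : ℤ := ∑ i ∈ Finset.range (m+1), ((2*m+1).choose (2*i) : ℤ) * (4*μ+1)^i with hS
  have hkey : ((2 * S : ℤ) : ℤ√(4*μ+1)) = ((2^(2*m+1) * Lseq μ (2*m+1) : ℤ) : ℤ√(4*μ+1)) := by
    rw [← binom_sum, key]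
  have h2S : 2 * S = 2^(2*m+1) * Lseq μ (2*m+1) := by
    exact_mod_cast hkey
  set L : ℤ := Lseq μ (2*m+1) with hL
  -- the rational sum equals (S : ℚ)
  have hsum : (∑ i ∈ Finset.range ((2*m+1-1)/2 + 1),
      (((2*m+1).choose (2 * i) : ℚ)) * (4 * μ + 1) ^ i) = (S : ℚ) := by
    rw [hm2, hS]
    push_cast
    ring
  have h2p : (2:ℚ)^(2*m+1) ≠ 0 := by positivity
  have hxval : x = (L : ℚ) / 2 := by
    have hQ : 2*(S:ℚ) = 2^(2*m+1)*(L:ℚ) := by exact_mod_cast h2S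
    rw [hx, hsum, zpow_neg, zpow_natCast]
    field_simp
    linear_combination hQ
  refine ⟨(2*μ)^(2*m+1) - 2*μ*L, ?_, ?_⟩
  · push_cast
    rw [hxval]
    ring
  · -- divisibility by p
    have : Fact (2*m+1).Prime := ⟨hp⟩
    rw [← ZMod.intCast_zmod_eq_zero_iff_dvd]
    push_cast
    have hpowμ : ((2*μ : ZMod (2*m+1)))^(2*m+1) = 2*μ := ZMod.pow_card _
    have hSmod : ((S : ZMod (2*m+1))) = 1 := by
      rw [hS]
      push_cast
      rw [Finset.sum_eq_single 0]
      · simp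
      · intro i hi hi0
        have hdvd : (2*m+1) ∣ (2*m+1).choose (2*i) :=
          hp.dvd_choose_self (by omega) (by simp at hi; omega)
        have : (((2*m+1).choose (2*i) : ℕ) : ZMod (2*m+1)) = 0 := by
          rw [ZMod.natCast_eq_zero_iff]; exact hdvd
        simp [this]
      · intro h; simp at h
    have hLmod : ((L : ZMod (2*m+1))) = 1 := by
      have hcast := congrArg (fun t : ℤ => (t : ZMod (2*m+1))) h2S
      push_cast at hcast
      rw [hSmod] at hcast
      have hpow2 : ((2 : ZMod (2*m+1)))^(2*m+1) = 2 := ZMod.pow_card _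
      rw [hpow2] at hcast
      have h2ne : (2 : ZMod (2*m+1)) ≠ 0 := by
        intro h
        have hd := (ZMod.natCast_eq_zero_iff 2 (2*m+1)).mp (by exact_mod_cast h)
        have hle := Nat.le_of_dvd (by omega) hd
        have := hp.two_le
        omega
      exact (mul_left_cancel₀ h2ne (by linear_combination hcast)).symm
    rw [hpowμ, hLmod]
    ring
end
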